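/- arXiv:2010.12668 — 3 statements merged into one kernel-verified Lean document; each statement's English description precedes it below -/
import Mathlib

section
/- Let θ* ≈ 0.2633155390 be the maximizer on [0, π/6] of the function f(θ) = (π/6 − θ + sin(2θ)/2) / ((1 + cos θ)²/√3). Then f(θ*) ≈ 0.2293647316, i.e., there exists θ ∈ [0, π/6] with f(θ) > 0.2293647, and f(θ) < 0.2293648 for all θ ∈ [0, π/6]. -/
open Real Set

/-- The covered-fraction function from Croft's construction for one color. -/
noncomputable def croftFrac (θ : ℝ) : ℝ :=
  (π / 6 - θ + Real.sin (2 * θ) / 2) / ((1 + Real.cos θ) ^ 2 / Real.sqrt 3)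

/-!
Clearing the denominator, `croftFrac θ < c` iff `croftGap c θ < 0`, where
`croftGap c θ = π/6 - θ + sin 2θ / 2 - c (1 + cos θ)² / √3`. Its derivative factors as
`2 sin θ · croftSlack c θ` with `croftSlack c θ = c (1 + cos θ) / √3 - sin θ` decreasing, so
`croftGap c` increases up to the zero `2 arctan (c / √3)` of the slack and decreases afterwards.
Both bounds are then read off at `θ₀ = 0.26331554`, close to that zero, with sin and cos
enclosed by their alternating Taylor polynomials: for `c = 0.2293647` the gap is positive at
`θ₀`; for `c = 0.2293648` the gap at `θ₀` is negative and the slack there is nonnegative but tiny,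
so the gap is at most its value at `θ₀` before `θ₀` and grows at rate at most that slack after.
-/

noncomputable def sinTaylor (n : ℕ) (x : ℝ) : ℝ :=
  ∑ k ∈ Finset.range n, (-1) ^ k * x ^ (2 * k + 1) / (2 * k + 1).factorial

noncomputable def cosTaylor (n : ℕ) (x : ℝ) : ℝ :=
  ∑ k ∈ Finset.range n, (-1) ^ k * x ^ (2 * k) / (2 * k).factorial

theorem hasDerivAt_sinTaylor (n : ℕ) (x : ℝ) : HasDerivAt (sinTaylor n) (cosTaylor n x) x := by
  unfold sinTaylor cosTaylor
  refine HasDerivAt.fun_sum fun k _ => ?_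
  refine (((hasDerivAt_pow (2 * k + 1) x).const_mul ((-1 : ℝ) ^ k)).div_const
    ((2 * k + 1).factorial : ℝ)).congr_deriv ?_
  rw [Nat.factorial_succ]
  push_cast
  field_simp

theorem hasDerivAt_cosTaylor (n : ℕ) (x : ℝ) :
    HasDerivAt (cosTaylor (n + 1)) (-sinTaylor n x) x := by
  have hsplit : cosTaylor (n + 1) = fun y =>
      ∑ k ∈ Finset.range n, (-1 : ℝ) ^ (k + 1) * y ^ (2 * k + 2) / (2 * k + 2).factorial + 1 := by
    ext y
    simp [cosTaylor, Finset.sum_range_succ', mul_add]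
  rw [hsplit]
  unfold sinTaylor
  rw [← Finset.sum_neg_distrib]
  refine (HasDerivAt.fun_sum fun k _ => ?_).add_const 1
  refine (((hasDerivAt_pow (2 * k + 2) x).const_mul ((-1 : ℝ) ^ (k + 1))).div_const
    ((2 * k + 2).factorial : ℝ)).congr_deriv ?_
  rw [Nat.factorial_succ (2 * k + 1)]
  push_cast
  field_simp
  ring

theorem monotoneOn_Ici_of_hasDerivAt_nonneg {f f' : ℝ → ℝ} {a : ℝ}
    (hf : ∀ x, HasDerivAt f (f' x) x) (hf' : ∀ x, a ≤ x → 0 ≤ f' x) : MonotoneOn f (Ici a) :=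
  monotoneOn_of_hasDerivWithinAt_nonneg (convex_Ici a)
    (fun x _ => (hf x).continuousAt.continuousWithinAt)
    (fun x _ => (hf x).hasDerivWithinAt)
    (fun x hx => hf' x (interior_subset hx))

theorem sin_sub_sinTaylor_sign_of_cos {n : ℕ}
    (hcos : ∀ x, 0 ≤ x → 0 ≤ (-1) ^ n * (cos x - cosTaylor n x)) {x : ℝ} (hx : 0 ≤ x) :
    0 ≤ (-1) ^ n * (sin x - sinTaylor n x) := by
  have hmono := monotoneOn_Ici_of_hasDerivAt_nonneg
    (f := fun y => (-1) ^ n * (sin y - sinTaylor n y))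
    (fun y => ((hasDerivAt_sin y).sub (hasDerivAt_sinTaylor n y)).const_mul _) hcos
  simpa [sinTaylor] using hmono self_mem_Ici hx hx

theorem cos_sub_cosTaylor_sign_of_sin {n : ℕ}
    (hsin : ∀ x, 0 ≤ x → 0 ≤ (-1) ^ n * (sin x - sinTaylor n x)) {x : ℝ} (hx : 0 ≤ x) :
    0 ≤ (-1) ^ (n + 1) * (cos x - cosTaylor (n + 1) x) := by
  have hmono := monotoneOn_Ici_of_hasDerivAt_nonneg
    (f := fun y => (-1) ^ (n + 1) * (cos y - cosTaylor (n + 1) y))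
    (fun y => ((hasDerivAt_cos y).sub (hasDerivAt_cosTaylor n y)).const_mul _)
    (fun y hy => by have := hsin y hy; rw [pow_succ]; linarith)
  simpa [cosTaylor, Finset.sum_range_succ'] using hmono self_mem_Ici hx hx

theorem cos_sub_cosTaylor_succ_sign (n : ℕ) {x : ℝ} (hx : 0 ≤ x) :
    0 ≤ (-1) ^ (n + 1) * (cos x - cosTaylor (n + 1) x) := by
  induction n generalizing x with
  | zero => simpa [cosTaylor] using cos_le_one x
  | succ n ih =>
    exact cos_sub_cosTaylor_sign_of_sin
      (fun _ hy => sin_sub_sinTaylor_sign_of_cos (fun _ hz => ih hz) hy) hx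

theorem sinTaylor_even_le_sin (m : ℕ) {x : ℝ} (hx : 0 ≤ x) : sinTaylor (2 * m + 2) x ≤ sin x := by
  have := sin_sub_sinTaylor_sign_of_cos (fun _ hy => cos_sub_cosTaylor_succ_sign (2 * m + 1) hy) hx
  rw [show 2 * m + 1 + 1 = 2 * m + 2 by ring, pow_add, pow_mul] at this
  norm_num at this
  linarith

theorem sin_le_sinTaylor_odd (m : ℕ) {x : ℝ} (hx : 0 ≤ x) : sin x ≤ sinTaylor (2 * m + 1) x := by
  have := sin_sub_sinTaylor_sign_of_cos (fun _ hy => cos_sub_cosTaylor_succ_sign (2 * m) hy) hx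
  rw [pow_succ, pow_mul] at this
  norm_num at this
  linarith

theorem cosTaylor_even_le_cos (m : ℕ) {x : ℝ} (hx : 0 ≤ x) : cosTaylor (2 * m + 2) x ≤ cos x := by
  have := cos_sub_cosTaylor_succ_sign (2 * m + 1) hx
  rw [show 2 * m + 1 + 1 = 2 * m + 2 by ring, pow_add, pow_mul] at this
  norm_num at this
  linarith

theorem cos_le_cosTaylor_odd (m : ℕ) {x : ℝ} (hx : 0 ≤ x) : cos x ≤ cosTaylor (2 * m + 1) x := by
  have := cos_sub_cosTaylor_succ_sign (2 * m) hx
  rw [pow_succ, pow_mul] at this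
  norm_num at this
  linarith

noncomputable def croftGap (c θ : ℝ) : ℝ :=
  π / 6 - θ + sin (2 * θ) / 2 - c * ((1 + cos θ) ^ 2 / √3)

noncomputable def croftSlack (c θ : ℝ) : ℝ :=
  c * (1 + cos θ) / √3 - sin θ

section
variable {c θ : ℝ}

theorem croftFrac_lt_iff (hθ : 0 < 1 + cos θ) : croftFrac θ < c ↔ croftGap c θ < 0 := by
  rw [croftFrac, div_lt_iff₀ (by positivity), croftGap, sub_neg]

theorem lt_croftFrac_iff (hθ : 0 < 1 + cos θ) : c < croftFrac θ ↔ 0 < croftGap c θ := by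
  rw [croftFrac, lt_div_iff₀ (by positivity), croftGap, sub_pos]

end

theorem hasDerivAt_croftGap (c θ : ℝ) :
    HasDerivAt (croftGap c) (2 * sin θ * croftSlack c θ) θ := by
  have hsin2 : HasDerivAt (fun t => sin (2 * t)) (cos (2 * θ) * 2) θ :=
    (hasDerivAt_sin (2 * θ)).comp θ ((hasDerivAt_id θ).const_mul 2 |>.congr_deriv (mul_one 2))
  have hden : HasDerivAt (fun t => (1 + cos t) ^ 2) (2 * (1 + cos θ) * -sin θ) θ := by
    simpa using ((hasDerivAt_cos θ).const_add 1).fun_pow 2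
  refine ((((hasDerivAt_const θ (π / 6)).sub (hasDerivAt_id θ)).add (hsin2.div_const 2)).sub
    ((hden.div_const √3).const_mul c)).congr_deriv ?_
  rw [croftSlack, cos_two_mul, cos_sq']
  ring

theorem croftSlack_antitoneOn {c : ℝ} (hc : 0 ≤ c) :
    AntitoneOn (croftSlack c) (Icc 0 (π / 2)) := by
  intro x hx y hy hxy
  have hcos : cos y ≤ cos x :=
    antitoneOn_cos ⟨hx.1, by linarith [hx.2, pi_pos]⟩ ⟨hy.1, by linarith [hy.2, pi_pos]⟩ hxy
  have hsin : sin x ≤ sin y :=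
    monotoneOn_sin ⟨by linarith [hx.1, pi_pos], hx.2⟩ ⟨by linarith [hy.1, pi_pos], hy.2⟩ hxy
  simp only [croftSlack]
  gcongr

section
variable {c t₀ : ℝ}

theorem croftGap_monotoneOn (hc : 0 ≤ c) (ht₀ : t₀ ∈ Icc 0 (π / 6))
    (hslack : 0 ≤ croftSlack c t₀) :
    MonotoneOn (croftGap c) (Icc 0 t₀) := by
  refine monotoneOn_of_hasDerivWithinAt_nonneg (convex_Icc 0 t₀)
    (fun θ _ => (hasDerivAt_croftGap c θ).continuousAt.continuousWithinAt)
    (fun θ _ => (hasDerivAt_croftGap c θ).hasDerivWithinAt) fun θ hθ => ?_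
  rw [interior_Icc] at hθ
  have hθ' : θ ∈ Icc 0 (π / 2) := ⟨hθ.1.le, by linarith [hθ.2, ht₀.2, pi_pos]⟩
  have hsin : 0 ≤ sin θ := sin_nonneg_of_nonneg_of_le_pi hθ.1.le (by linarith [hθ'.2, pi_pos])
  have : 0 ≤ croftSlack c θ :=
    hslack.trans (croftSlack_antitoneOn hc hθ' ⟨ht₀.1, by linarith [ht₀.2, pi_pos]⟩ hθ.2.le)
  positivity

theorem croftGap_sub_le (hc : 0 ≤ c) (ht₀ : t₀ ∈ Icc 0 (π / 6))
    (hslack : 0 ≤ croftSlack c t₀) {θ : ℝ} (hθ : θ ∈ Icc t₀ (π / 6)) :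
    croftGap c θ - croftGap c t₀ ≤ croftSlack c t₀ * (θ - t₀) := by
  refine (convex_Icc t₀ (π / 6)).image_sub_le_mul_sub_of_deriv_le
    (fun θ _ => (hasDerivAt_croftGap c θ).continuousAt.continuousWithinAt)
    (fun θ _ => (hasDerivAt_croftGap c θ).differentiableAt.differentiableWithinAt)
    (fun ξ hξ => ?_) t₀ (left_mem_Icc.2 ht₀.2) θ hθ hθ.1
  rw [interior_Icc] at hξ
  rw [(hasDerivAt_croftGap c ξ).deriv]
  have hξ' : ξ ∈ Icc 0 (π / 2) := ⟨by linarith [ht₀.1, hξ.1], by linarith [hξ.2, pi_pos]⟩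
  have hslackξ := croftSlack_antitoneOn hc ⟨ht₀.1, by linarith [ht₀.2, pi_pos]⟩ hξ' hξ.1.le
  have hsin0 : 0 ≤ sin ξ := sin_nonneg_of_nonneg_of_le_pi hξ'.1 (by linarith [hξ'.2, pi_pos])
  have hsin1 : sin ξ ≤ 1 / 2 := by
    rw [← sin_pi_div_six]
    exact monotoneOn_sin ⟨by linarith [hξ'.1, pi_pos], hξ'.2⟩
      ⟨by linarith [pi_pos], by linarith [pi_pos]⟩ hξ.2.le
  -- `2 sin ξ ≤ 1`, so the derivative `2 sin ξ · croftSlack c ξ` never exceeds `croftSlack c t₀`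
  rcases le_total 0 (croftSlack c ξ) with h | h <;> nlinarith

theorem croftGap_le (hc : 0 ≤ c) (ht₀ : t₀ ∈ Icc 0 (π / 6))
    (hslack : 0 ≤ croftSlack c t₀) {θ : ℝ} (hθ : θ ∈ Icc 0 (π / 6)) :
    croftGap c θ ≤ croftGap c t₀ + croftSlack c t₀ * (π / 6 - t₀) := by
  have hrest : 0 ≤ croftSlack c t₀ * (π / 6 - t₀) := mul_nonneg hslack (by linarith [ht₀.2])
  rcases le_total θ t₀ with h | h
  · have := croftGap_monotoneOn hc ht₀ hslack ⟨hθ.1, h⟩ ⟨ht₀.1, le_rfl⟩ h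
    linarith
  · have := croftGap_sub_le hc ht₀ hslack ⟨h, hθ.2⟩
    have : croftSlack c t₀ * (θ - t₀) ≤ croftSlack c t₀ * (π / 6 - t₀) :=
      mul_le_mul_of_nonneg_left (by linarith [hθ.2]) hslack
    linarith

end

local notation "θ₀" => (0.26331554 : ℝ)

theorem sqrt_three_mem : √3 ∈ Icc (1.7320508075 : ℝ) 1.7320508076 := by
  have h := sq_sqrt (show (0 : ℝ) ≤ 3 by norm_num)
  have := sqrt_nonneg 3
  constructor <;> nlinarith

theorem sin_θ₀_mem : sin θ₀ ∈ Icc (0.2602832376 : ℝ) 0.2602832377 := by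
  constructor
  · refine le_trans ?_ (sinTaylor_even_le_sin 1 (by norm_num))
    norm_num [sinTaylor, Finset.sum_range_succ, Nat.factorial]
  · refine le_trans (sin_le_sinTaylor_odd 2 (by norm_num)) ?_
    norm_num [sinTaylor, Finset.sum_range_succ, Nat.factorial]

theorem cos_θ₀_mem : cos θ₀ ∈ Icc (0.9655323066 : ℝ) 0.9655323072 := by
  constructor
  · refine le_trans ?_ (cosTaylor_even_le_cos 1 (by norm_num))
    norm_num [cosTaylor, Finset.sum_range_succ, Nat.factorial]
  · refine le_trans (cos_le_cosTaylor_odd 2 (by norm_num)) ?_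
    norm_num [cosTaylor, Finset.sum_range_succ, Nat.factorial]

theorem θ₀_mem : θ₀ ∈ Icc 0 (π / 6) :=
  ⟨by norm_num, by linarith [pi_gt_d2]⟩

theorem croftGap_θ₀_pos : 0 < croftGap 0.2293647 θ₀ := by
  obtain ⟨hs, -⟩ := sin_θ₀_mem
  obtain ⟨hc, hc'⟩ := cos_θ₀_mem
  obtain ⟨hr, -⟩ := sqrt_three_mem
  have hπ := pi_gt_d20
  have hsc : 0.2602832376 * 0.9655323066 ≤ sin θ₀ * cos θ₀ :=
    mul_le_mul hs hc (by norm_num) (by linarith)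
  have hden : (1 + cos θ₀) ^ 2 / √3 ≤ (1 + 0.9655323072) ^ 2 / 1.7320508075 := by
    gcongr
  rw [croftGap, sin_two_mul]
  nlinarith

theorem croftSlack_θ₀_nonneg : 0 ≤ croftSlack 0.2293648 θ₀ := by
  obtain ⟨-, hs⟩ := sin_θ₀_mem
  obtain ⟨hc, -⟩ := cos_θ₀_mem
  obtain ⟨-, hr⟩ := sqrt_three_mem
  have : 0.2293648 * (1 + 0.9655323066) / 1.7320508076 ≤ 0.2293648 * (1 + cos θ₀) / √3 := by
    gcongr
  rw [croftSlack]
  linarith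

theorem croftGap_θ₀_add_neg :
    croftGap 0.2293648 θ₀ + croftSlack 0.2293648 θ₀ * (π / 6 - θ₀) < 0 := by
  obtain ⟨hs, hs'⟩ := sin_θ₀_mem
  obtain ⟨hc, hc'⟩ := cos_θ₀_mem
  obtain ⟨hr, hr'⟩ := sqrt_three_mem
  have hπ := pi_lt_d20
  have hsc : sin θ₀ * cos θ₀ ≤ 0.2602832377 * 0.9655323072 :=
    mul_le_mul hs' hc' (by linarith) (by norm_num)
  have hden : (1 + 0.9655323066) ^ 2 / 1.7320508076 ≤ (1 + cos θ₀) ^ 2 / √3 := by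
    gcongr
  have hslack :
      0.2293648 * (1 + cos θ₀) / √3 ≤ 0.2293648 * (1 + 0.9655323072) / 1.7320508075 := by
    gcongr
  have hslack₀ := croftSlack_θ₀_nonneg
  rw [croftSlack] at hslack₀
  rw [croftGap, croftSlack, sin_two_mul]
  nlinarith

theorem croft_one_color_max :
    (∃ θ ∈ Set.Icc (0 : ℝ) (π / 6), croftFrac θ > 0.2293647) ∧
    (∀ θ ∈ Set.Icc (0 : ℝ) (π / 6), croftFrac θ < 0.2293648) := by
  have hcos : ∀ θ ∈ Icc (0 : ℝ) (π / 6), 0 < 1 + cos θ := fun θ hθ => by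
    linarith [cos_nonneg_of_mem_Icc (x := θ)
      ⟨by linarith [hθ.1, pi_pos], by linarith [hθ.2, pi_pos]⟩]
  refine ⟨⟨θ₀, θ₀_mem, (lt_croftFrac_iff (hcos θ₀ θ₀_mem)).2 croftGap_θ₀_pos⟩, fun θ hθ => ?_⟩
  rw [croftFrac_lt_iff (hcos θ hθ)]
  exact (croftGap_le (by norm_num) θ₀_mem croftSlack_θ₀_nonneg hθ).trans_lt croftGap_θ₀_add_neg
end

section
/- The function f(θ) = (π/6 − θ + sin(2θ)/2) / ((1 + cos θ)²/√3) on the interval [0, π/6] attains its maximum at the unique interior critical point θ* satisfying f'(θ*) = 0, and f is strictly increasing on [0, θ*] and strictly decreasing on [θ*, π/6]. -/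
open Real Set

/-! The derivative of `croftFrac` factors as a positive weight times `π / 6 - (θ + sin θ)`,
and `θ ↦ θ + sin θ` is strictly increasing, so `croftFrac` increases up to the unique root
`θ*` of `θ + sin θ = π / 6` and decreases after it. -/

theorem hasDerivAt_croftFrac {θ : ℝ} (h : 1 + cos θ ≠ 0) :
    HasDerivAt croftFrac
      (2 * √3 * sin θ / (1 + cos θ) ^ 3 * (π / 6 - (θ + sin θ))) θ := by
  have hsin2 := (hasDerivAt_sin (2 * θ)).comp θ ((hasDerivAt_id' θ).const_mul 2)
  have hnum := ((hasDerivAt_id' θ).const_sub (π / 6)).fun_add (hsin2.div_const 2)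
  have hden := (((hasDerivAt_cos θ).const_add 1).pow 2).div_const √3
  refine (hnum.div hden (div_ne_zero (pow_ne_zero 2 h) (by positivity))).congr_deriv ?_
  simp only [Function.comp_apply, Pi.pow_apply]
  rw [cos_two_mul, cos_sq', sin_two_mul]
  field_simp
  ring

theorem one_add_cos_pos {θ : ℝ} (hθ : θ ∈ Ioo (-π) π) : 0 < 1 + cos θ := by
  have := strictAntiOn_cos ⟨abs_nonneg θ, (abs_lt.2 hθ).le⟩ ⟨pi_pos.le, le_rfl⟩ (abs_lt.2 hθ)
  rw [cos_abs, cos_pi] at this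
  linarith

theorem continuousOn_croftFrac : ContinuousOn croftFrac (Ioo (-π) π) := fun _ hθ =>
  (hasDerivAt_croftFrac (one_add_cos_pos hθ).ne').continuousAt.continuousWithinAt

section Deriv

variable {θ : ℝ} (hθ : θ ∈ Ioo 0 π)
include hθ

theorem croftFrac_deriv_weight_pos : 0 < 2 * √3 * sin θ / (1 + cos θ) ^ 3 := by
  have := sin_pos_of_mem_Ioo hθ
  have := one_add_cos_pos ⟨by linarith [hθ.1, pi_pos], hθ.2⟩
  positivity

theorem deriv_croftFrac :
    deriv croftFrac θ = 2 * √3 * sin θ / (1 + cos θ) ^ 3 * (π / 6 - (θ + sin θ)) :=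
  (hasDerivAt_croftFrac (one_add_cos_pos ⟨by linarith [hθ.1, pi_pos], hθ.2⟩).ne').deriv

theorem deriv_croftFrac_pos (h : θ + sin θ < π / 6) : 0 < deriv croftFrac θ := by
  rw [deriv_croftFrac hθ]
  exact mul_pos (croftFrac_deriv_weight_pos hθ) (by linarith)

theorem deriv_croftFrac_neg (h : π / 6 < θ + sin θ) : deriv croftFrac θ < 0 := by
  rw [deriv_croftFrac hθ]
  exact mul_neg_of_pos_of_neg (croftFrac_deriv_weight_pos hθ) (by linarith)

theorem deriv_croftFrac_eq_zero_iff : deriv croftFrac θ = 0 ↔ θ + sin θ = π / 6 := by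
  rw [deriv_croftFrac hθ, mul_eq_zero, or_iff_right (croftFrac_deriv_weight_pos hθ).ne',
    sub_eq_zero, eq_comm]

end Deriv

theorem strictMonoOn_add_sin : StrictMonoOn (fun x => x + sin x) (Icc (-(π / 2)) (π / 2)) :=
  fun _ hx _ hy hxy => add_lt_add hxy (strictMonoOn_sin hx hy hxy)

theorem exists_add_sin_eq_pi_div_six : ∃ θ ∈ Ioo 0 (π / 6), θ + sin θ = π / 6 := by
  have hpi := pi_pos
  have hcont : Continuous fun x : ℝ => x + sin x := by fun_prop
  refine intermediate_value_Ioo (by linarith) hcont.continuousOn ?_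
  simp only [add_zero, sin_zero, sin_pi_div_six]
  constructor <;> linarith

theorem strictMonoOn_strictAntiOn_of_deriv_pos_neg {f : ℝ → ℝ} {a b c : ℝ}
    (hf : ContinuousOn f (Icc a b)) (hac : a ≤ c) (hcb : c ≤ b)
    (hpos : ∀ x ∈ Ioo a c, 0 < deriv f x) (hneg : ∀ x ∈ Ioo c b, deriv f x < 0) :
    StrictMonoOn f (Icc a c) ∧ StrictAntiOn f (Icc c b) := by
  constructor
  · refine strictMonoOn_of_deriv_pos (convex_Icc a c) (hf.mono (Icc_subset_Icc_right hcb)) ?_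
    rwa [interior_Icc]
  · refine strictAntiOn_of_deriv_neg (convex_Icc c b) (hf.mono (Icc_subset_Icc_left hac)) ?_
    rwa [interior_Icc]

theorem croft_unique_interior_max :
    ∃ θstar ∈ Set.Ioo (0 : ℝ) (π / 6),
      deriv croftFrac θstar = 0 ∧
      (∀ θ ∈ Set.Ioo (0 : ℝ) (π / 6), deriv croftFrac θ = 0 → θ = θstar) ∧
      StrictMonoOn croftFrac (Set.Icc 0 θstar) ∧
      StrictAntiOn croftFrac (Set.Icc θstar (π / 6)) ∧
      IsMaxOn croftFrac (Set.Icc 0 (π / 6)) θstar := by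
  have hpi := pi_pos
  obtain ⟨θs, hθs, hroot⟩ := exists_add_sin_eq_pi_div_six
  have hIoo : Ioo 0 (π / 6) ⊆ Ioo 0 π := Ioo_subset_Ioo_right (by linarith)
  have hIcc : Icc 0 (π / 6) ⊆ Icc (-(π / 2)) (π / 2) := Icc_subset_Icc (by linarith) (by linarith)
  have hθs' := hIcc (Ioo_subset_Icc_self hθs)
  have hlt : ∀ θ ∈ Ioo 0 (π / 6), θ < θs → θ + sin θ < π / 6 := fun θ hθ =>
    hroot ▸ strictMonoOn_add_sin (hIcc (Ioo_subset_Icc_self hθ)) hθs'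
  have hgt : ∀ θ ∈ Ioo 0 (π / 6), θs < θ → π / 6 < θ + sin θ := fun θ hθ =>
    hroot ▸ strictMonoOn_add_sin hθs' (hIcc (Ioo_subset_Icc_self hθ))
  obtain ⟨hmono, hanti⟩ := strictMonoOn_strictAntiOn_of_deriv_pos_neg
    (continuousOn_croftFrac.mono fun θ hθ => ⟨by linarith [hθ.1], by linarith [hθ.2]⟩)
    hθs.1.le hθs.2.le
    (fun θ hθ => have hθ' : θ ∈ Ioo 0 (π / 6) := ⟨hθ.1, hθ.2.trans hθs.2⟩
      deriv_croftFrac_pos (hIoo hθ') (hlt θ hθ' hθ.2))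
    (fun θ hθ => have hθ' : θ ∈ Ioo 0 (π / 6) := ⟨hθs.1.trans hθ.1, hθ.2⟩
      deriv_croftFrac_neg (hIoo hθ') (hgt θ hθ' hθ.1))
  refine ⟨θs, hθs, (deriv_croftFrac_eq_zero_iff (hIoo hθs)).2 hroot, fun θ hθ hzero => ?_,
    hmono, hanti, isMaxOn_Icc_of_mono_anti hmono.monotoneOn hanti.antitoneOn⟩
  exact strictMonoOn_add_sin.injOn (hIcc (Ioo_subset_Icc_self hθ)) hθs'
    (((deriv_croftFrac_eq_zero_iff (hIoo hθ)).1 hzero).trans hroot.symm)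
end

section
/- If a measurable subset V ⊆ ℝ² is invariant under translation by a lattice L with fundamental domain of area S_Σ, and the portion of V in a fundamental domain has area S_Δ > 0 with ρ = S_Σ/S_Δ, then for any finite set P ⊂ ℝ² with |P| ≤ ⌈ρ⌉ − 1 (the greatest integer strictly less than ρ) there exists a translation vector t ∈ ℝ² such that (P + t) ∩ V = ∅. -/
open MeasureTheory Pointwise

/-!
Translating a point set `P` by `t` hits the void set `V` exactly when `t` lies in one of the
translates `-p + V`, `p ∈ P`. Since `V` is invariant under the lattice `L`, each of these
translates meets a fundamental domain `D` of `L` in a set of the same area `S_Δ` as `V ∩ D`.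
If `|P| < ρ = S_Σ / S_Δ`, these `|P|` pieces have total area `|P| S_Δ < S_Σ`, so they cannot cover
`D`, and any uncovered `t ∈ D` is a translation along which `P` avoids `V`.
-/

theorem ZSpan.fundamentalDomain_fin_two {E : Type*} [NormedAddCommGroup E] [NormedSpace ℝ E]
    (b : Module.Basis (Fin 2) ℝ E) :
    fundamentalDomain b =
      (fun t : ℝ × ℝ => t.1 • b 0 + t.2 • b 1) '' (Set.Ico 0 1 ×ˢ Set.Ico 0 1) := by
  ext x
  simp only [mem_fundamentalDomain, Fin.forall_fin_two, Set.mem_image, Prod.exists,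
    Set.mem_prod]
  constructor
  · rintro ⟨h₀, h₁⟩
    exact ⟨_, _, ⟨h₀, h₁⟩, by simpa only [Fin.sum_univ_two] using b.sum_repr x⟩
  · rintro ⟨s, t, ⟨hs, ht⟩, rfl⟩
    simpa using ⟨hs, ht⟩

theorem AddAction.mem_stabilizer_set_of_add_mem_iff {E : Type*} [AddCommGroup E] {V : Set E}
    {v : E} (h : ∀ p, p + v ∈ V ↔ p ∈ V) : v ∈ stabilizer E V := by
  rw [mem_stabilizer_iff]
  ext x
  rw [Set.mem_vadd_set_iff_neg_vadd_mem, vadd_eq_add, ← h, neg_add_cancel_comm]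

namespace MeasureTheory

theorem exists_mem_forall_notMem_of_sum_measure_inter_lt {α ι : Type*} [MeasurableSpace α]
    {μ : Measure α} {F : Set α} {s : ι → Set α} {P : Finset ι}
    (h : ∑ i ∈ P, μ (s i ∩ F) < μ F) : ∃ t ∈ F, ∀ i ∈ P, t ∉ s i := by
  by_contra! hcover
  refine ((measure_mono fun t ht => ?_).trans (measure_biUnion_finset_le P _)).not_gt h
  obtain ⟨i, hi, hti⟩ := hcover t ht
  exact Set.mem_biUnion hi ⟨hti, ht⟩

namespace IsAddFundamentalDomain

variable {E : Type*} [AddCommGroup E] [MeasurableSpace E] [MeasurableAdd E] {μ : Measure E}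
  [μ.IsAddLeftInvariant] {L : AddSubgroup E} [Countable L] {F V : Set E}

theorem measure_preimage_add_inter (hF : IsAddFundamentalDomain L F μ) (hV : MeasurableSet V)
    (hVL : L ≤ AddAction.stabilizer E V) (p : E) :
    μ ((p + ·) ⁻¹' V ∩ F) = μ (V ∩ F) := by
  have hinv : ∀ g : L, (g +ᵥ ·) ⁻¹' V = V := fun g => by
    rw [Set.preimage_vadd]
    exact AddAction.mem_stabilizer_iff.mp (hVL (neg_mem g.2))
  have hpull : (p + ·) ⁻¹' V ∩ F = (p + ·) ⁻¹' (V ∩ (p +ᵥ F)) := by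
    rw [Set.preimage_inter]
    exact congrArg _ ((Set.preimage_vadd p (p +ᵥ F)).trans (neg_vadd_vadd p F)).symm
  rw [hpull, measure_preimage_add]
  exact (hF.vadd_of_comm p).measure_set_eq hF hV hinv

theorem exists_add_notMem_of_card_mul_lt (hF : IsAddFundamentalDomain L F μ)
    (hV : MeasurableSet V) (hVL : L ≤ AddAction.stabilizer E V) (P : Finset E)
    (hP : P.card * μ (V ∩ F) < μ F) : ∃ t, ∀ p ∈ P, p + t ∉ V := by
  have hsum : ∑ p ∈ P, μ ((p + ·) ⁻¹' V ∩ F) < μ F := by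
    simpa [hF.measure_preimage_add_inter hV hVL] using hP
  obtain ⟨t, -, ht⟩ := exists_mem_forall_notMem_of_sum_measure_inter_lt hsum
  exact ⟨t, ht⟩

end IsAddFundamentalDomain

end MeasureTheory

/-- Pritikin's pigeonhole argument: a lattice-periodic void set `V` occupying a
fraction `1/ρ` of the plane can be avoided, by a suitable translation, by any
point set with at most `⌈ρ⌉ - 1` points. -/
theorem pigeonhole_avoid_voids
    (V : Set (ℝ × ℝ)) (hV : MeasurableSet V)
    (v₁ v₂ : ℝ × ℝ) (hind : LinearIndependent ℝ ![v₁, v₂])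
    (hper₁ : ∀ p : ℝ × ℝ, p + v₁ ∈ V ↔ p ∈ V)
    (hper₂ : ∀ p : ℝ × ℝ, p + v₂ ∈ V ↔ p ∈ V)
    (D : Set (ℝ × ℝ))
    (hD : D = (fun t : ℝ × ℝ => t.1 • v₁ + t.2 • v₂) '' (Set.Ico 0 1 ×ˢ Set.Ico 0 1))
    (Stot Svoid ρ : ℝ)
    (hStot : Stot = (volume D).toReal)
    (hSvoid : Svoid = (volume (V ∩ D)).toReal) (hSvoidpos : 0 < Svoid)
    (hρ : ρ = Stot / Svoid) :
    ∀ P : Finset (ℝ × ℝ), (P.card : ℤ) ≤ ⌈ρ⌉ - 1 →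
      ∃ t : ℝ × ℝ, ∀ p ∈ P, p + t ∉ V := by
  intro P hP
  let b := basisOfLinearIndependentOfCardEqFinrank hind (by simp)
  have hb : ⇑b = ![v₁, v₂] := coe_basisOfLinearIndependentOfCardEqFinrank hind _
  set L := (Submodule.span ℤ (Set.range b)).toAddSubgroup with hL
  have : Countable L := inferInstanceAs (Countable (Submodule.span ℤ (Set.range b)))
  have hDb : D = ZSpan.fundamentalDomain b := by
    simp [hD, ZSpan.fundamentalDomain_fin_two, hb]
  have hLV : L ≤ AddAction.stabilizer (ℝ × ℝ) V := by
    rw [hL, Submodule.span_int_eq_addSubgroupClosure, AddSubgroup.closure_le, hb,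
      Matrix.range_cons_cons_empty, Set.insert_subset_iff, Set.singleton_subset_iff]
    exact ⟨AddAction.mem_stabilizer_set_of_add_mem_iff hper₁,
      AddAction.mem_stabilizer_set_of_add_mem_iff hper₂⟩
  have hVD : volume (V ∩ D) ≠ ⊤ := fun h => hSvoidpos.ne' (by simp [hSvoid, h])
  have hDfin : volume D ≠ ⊤ := by
    rw [hDb]; exact (ZSpan.fundamentalDomain_isBounded b).measure_lt_top.ne
  have hcard : (P.card : ℝ) < ρ := by exact_mod_cast Int.lt_ceil.mp (by omega)
  have hlt : P.card * volume (V ∩ D) < volume D := by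
    rwa [← ENNReal.toReal_lt_toReal (ENNReal.mul_ne_top (ENNReal.natCast_ne_top _) hVD) hDfin,
      ENNReal.toReal_mul, ENNReal.toReal_natCast, ← hSvoid, ← hStot, ← lt_div_iff₀ hSvoidpos, ← hρ]
  rw [hDb] at hlt
  exact (ZSpan.isAddFundamentalDomain' b volume).exists_add_notMem_of_card_mul_lt hV hLV P hlt
end
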